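/- arXiv:2406.10872 — 2 statements merged into one kernel-verified Lean document; each statement's English description precedes it below -/
import Mathlib

section
/- Let ε ∈ (0, exp(-2)), G an abelian group, and A a non-empty finite distributional ε-approximate group in G. Then ΔH(A) := H(U_A + U_A) - H(U_A) ≤ 2ε log(ε⁻¹|A|). -/
open Real
open scoped Pointwise symmDiff

/-- Shannon entropy of a (finitely supported) distribution, natural log,
with the convention `0 * log 0 = 0`. -/
noncomputable def entropy {α : Type*} (p : α → ℝ) : ℝ :=
  -∑ᶠ x, p x * Real.log (p x)

/-- `p` is a finitely supported probability mass function. -/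
def IsPMF {α : Type*} (p : α → ℝ) : Prop :=
  (∀ x, 0 ≤ p x) ∧ (Function.support p).Finite ∧ ∑ᶠ x, p x = 1

/-- Distribution of `X + Y` for independent `X ~ p`, `Y ~ q`. -/
noncomputable def conv {G : Type*} [AddCommGroup G] (p q : G → ℝ) : G → ℝ :=
  fun z => ∑ᶠ x, p x * q (z - x)

/-- The uniform distribution on a set `A`. -/
noncomputable def uniformSet {G : Type*} (A : Set G) : G → ℝ :=
  A.indicator fun _ => 1 / A.ncard

/-- Entropic Ruzsa distance between two distributions. -/
noncomputable def rdist {G : Type*} [AddCommGroup G] (p q : G → ℝ) : ℝ :=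
  entropy (conv p q) - (entropy p + entropy q) / 2

/-- Probability of an event under distribution `p`. -/
noncomputable def probOf {α : Type*} (p : α → ℝ) (S : Set α) : ℝ :=
  ∑ᶠ x ∈ S, p x

/-- `A` is a distributional ε-approximate group. -/
def IsDistribApproxGroup {G : Type*} [AddCommGroup G] (ε : ℝ) (A : Set G) : Prop :=
  ∃ U : Set G, U.ncard = A.ncard ∧
    (1 - ε) * (A.ncard : ℝ) ^ 2 ≤
      ({p : G × G | p.1 ∈ A ∧ p.2 ∈ A ∧ p.1 + p.2 ∈ U}.ncard : ℝ)

/-!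
Let `s` be the law of `U_A + U_A` and let `T` be a set of `|A|` points on which `s` has mass
`1 - δ ≥ 1 - ε`. The rest of `s` lives on at most `|A|²` points of `A + A`, so Jensen's inequality
on the two pieces gives `H(s) ≤ (1 - δ) log |A| + 2δ log |A| + h(δ)`, with `h` the binary entropy.
Hence `ΔH(A) ≤ h(δ) + δ log |A|`, which for `δ ≤ ε ≤ e⁻¹` is at most `2ε log (ε⁻¹ |A|)`.
-/

open Finset Function

lemma negMulLog_inv (x : ℝ) : negMulLog x⁻¹ = x⁻¹ * log x := by
  simp [negMulLog, log_inv]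

/-- `-δ log δ` lies below its tangent line at `ε`. -/
lemma negMulLog_le_sub_sub_mul_log {δ ε : ℝ} (hδ : 0 ≤ δ) (hε : 0 < ε) :
    negMulLog δ ≤ ε - δ - δ * log ε := by
  have h := negMulLog_le_one_sub_self (div_nonneg hδ hε.le)
  rw [div_eq_mul_inv, negMulLog_mul, negMulLog_inv] at h
  field_simp at h
  linarith

lemma binEntropy_add_mul_le {δ ε L : ℝ} (hδ : 0 ≤ δ) (hδε : δ ≤ ε) (hε : 0 < ε)
    (hε₁ : ε ≤ exp (-1)) (hL : 0 ≤ L) :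
    binEntropy δ + δ * L ≤ 2 * ε * (L - log ε) := by
  have hlogε : log ε ≤ -1 := by simpa using log_le_log hε hε₁
  have h₁ : negMulLog (1 - δ) ≤ δ := by
    have hε₂ : ε ≤ 1 := hε₁.trans (exp_le_one_iff.2 (by norm_num))
    simpa using negMulLog_le_one_sub_self (sub_nonneg.2 (hδε.trans hε₂))
  have h₂ := negMulLog_le_sub_sub_mul_log hδ hε
  rw [binEntropy_eq_negMulLog_add_negMulLog_one_sub]
  nlinarith [mul_le_mul_of_nonneg_right hδε hL,
    mul_le_mul_of_nonneg_right hδε (by linarith : 0 ≤ -log ε), mul_nonneg hε.le hL]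

section Entropy

variable {α : Type*}

lemma entropy_eq_sum_negMulLog {p : α → ℝ} {s : Finset α} (hp : support p ⊆ s) :
    entropy p = ∑ x ∈ s, negMulLog (p x) := by
  have hsupp : support (fun x ↦ p x * log (p x)) ⊆ s := (support_mul_subset_left _ _).trans hp
  rw [entropy, finsum_eq_sum_of_support_subset _ hsupp, ← sum_neg_distrib]
  simp only [negMulLog_eq_neg]

/-- Jensen's inequality for the concave function `negMulLog`, against the uniform weights on `s`. -/
lemma sum_negMulLog_le {s : Finset α} {f : α → ℝ} {M : ℝ} (hf : ∀ x ∈ s, 0 ≤ f x)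
    (hs : (#s : ℝ) ≤ M) :
    ∑ x ∈ s, negMulLog (f x) ≤ negMulLog (∑ x ∈ s, f x) + (∑ x ∈ s, f x) * log M := by
  rcases s.eq_empty_or_nonempty with rfl | hne
  · simp
  have hk : (0 : ℝ) < #s := by exact_mod_cast hne.card_pos
  have hjensen := concaveOn_negMulLog.le_map_sum (t := s) (w := fun _ ↦ (#s : ℝ)⁻¹) (p := f)
    (fun _ _ ↦ by positivity) (by simp [hk.ne']) hf
  rw [← smul_sum, ← smul_sum, smul_eq_mul, smul_eq_mul, negMulLog_mul, negMulLog_inv,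
    show ∀ a b c : ℝ, a * (c * b) + c * negMulLog a = c * (negMulLog a + a * b) by intros; ring,
    mul_le_mul_iff_of_pos_left (inv_pos.2 hk)] at hjensen
  have hlog : (∑ x ∈ s, f x) * log #s ≤ (∑ x ∈ s, f x) * log M :=
    mul_le_mul_of_nonneg_left (log_le_log hk hs) (sum_nonneg hf)
  linarith

lemma entropy_le_of_support_subset_union [DecidableEq α] {p : α → ℝ} {s t : Finset α}
    {M N : ℝ} (hp : ∀ x, 0 ≤ p x) (hst : Disjoint s t) (hsupp : support p ⊆ ↑(s ∪ t))
    (hs : (#s : ℝ) ≤ M) (ht : (#t : ℝ) ≤ N) :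
    entropy p ≤ negMulLog (∑ x ∈ s, p x) + (∑ x ∈ s, p x) * log M
      + (negMulLog (∑ x ∈ t, p x) + (∑ x ∈ t, p x) * log N) := by
  rw [entropy_eq_sum_negMulLog hsupp, sum_union hst]
  exact add_le_add (sum_negMulLog_le (fun x _ ↦ hp x) hs) (sum_negMulLog_le (fun x _ ↦ hp x) ht)

lemma uniformSet_of_mem {A : Set α} {x : α} (hx : x ∈ A) :
    uniformSet A x = (A.ncard : ℝ)⁻¹ := by
  rw [uniformSet, Set.indicator_of_mem hx, one_div]

lemma uniformSet_nonneg (A : Set α) (x : α) : 0 ≤ uniformSet A x :=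
  Set.indicator_nonneg (fun _ _ ↦ by positivity) x

lemma support_uniformSet_subset {A : Set α} (hA : A.Finite) :
    support (uniformSet A) ⊆ hA.toFinset := by
  simp [uniformSet]

lemma entropy_uniformSet {A : Set α} (hA : A.Finite) : entropy (uniformSet A) = log A.ncard := by
  rw [entropy_eq_sum_negMulLog (support_uniformSet_subset hA)]
  rw [sum_congr rfl fun x hx ↦ by rw [uniformSet_of_mem (hA.mem_toFinset.1 hx)]]
  rw [sum_const, ← Set.ncard_eq_toFinset_card A hA, nsmul_eq_mul, negMulLog, log_inv]
  rcases eq_or_ne (A.ncard : ℝ) 0 with h | h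
  · simp [h]
  · field_simp

end Entropy

section Convolution

variable {G : Type*} [AddCommGroup G] {p q : G → ℝ} {S S' : Finset G}

lemma conv_nonneg (hp : ∀ x, 0 ≤ p x) (hq : ∀ x, 0 ≤ q x) (z : G) : 0 ≤ conv p q z :=
  finsum_nonneg fun x ↦ mul_nonneg (hp x) (hq _)

lemma conv_eq_sum (hp : support p ⊆ S) (z : G) : conv p q z = ∑ x ∈ S, p x * q (z - x) :=
  finsum_eq_sum_of_support_subset _ ((support_mul_subset_left _ _).trans hp)

variable [DecidableEq G]

lemma support_conv_subset (hp : support p ⊆ S) (hq : support q ⊆ S') :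
    support (conv p q) ⊆ ↑(S + S') := by
  intro z hz
  rw [mem_support, conv_eq_sum hp] at hz
  obtain ⟨x, hxS, hx⟩ := exists_ne_zero_of_sum_ne_zero hz
  exact mem_add.2 ⟨x, hxS, z - x, hq (right_ne_zero_of_mul hx), add_sub_cancel _ _⟩

/-- The mass that the law of `X + Y` puts on `T`, for independent `X ~ p` and `Y ~ q`. -/
lemma sum_conv_eq (hp : support p ⊆ S) (hq : support q ⊆ S') (T : Finset G) :
    ∑ z ∈ T, conv p q z = ∑ xy ∈ S ×ˢ S' with xy.1 + xy.2 ∈ T, p xy.1 * q xy.2 := by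
  simp_rw [conv_eq_sum hp, ← sum_product']
  refine sum_bij_ne_zero (fun zx _ _ ↦ (zx.2, zx.1 - zx.2)) ?_ ?_ ?_ ?_
  · intro zx hzx hne
    obtain ⟨hz, hx⟩ := mem_product.1 hzx
    simpa [hx, hz] using hq (right_ne_zero_of_mul hne)
  · intro zx _ _ zx' _ _ h
    obtain ⟨h₂, h₁⟩ := Prod.mk.inj h
    rw [h₂] at h₁
    exact Prod.ext (sub_left_injective h₁) h₂
  · intro xy hxy hne
    obtain ⟨hxy, hxyT⟩ := mem_filter.1 hxy
    obtain ⟨hx, -⟩ := mem_product.1 hxy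
    exact ⟨(xy.1 + xy.2, xy.1), mem_product.2 ⟨hxyT, hx⟩, by simpa using hne, by simp⟩
  · intro zx _ _
    rfl

end Convolution

section UniformConvolution

variable {G : Type*} [AddCommGroup G] [DecidableEq G] {A : Set G}

lemma sum_conv_uniformSet {A : Set G} (hA : A.Finite) (T : Finset G) :
    ∑ z ∈ T, conv (uniformSet A) (uniformSet A) z
      = #{xy ∈ hA.toFinset ×ˢ hA.toFinset | xy.1 + xy.2 ∈ T} / (A.ncard : ℝ) ^ 2 := by
  rw [sum_conv_eq (support_uniformSet_subset hA) (support_uniformSet_subset hA)]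
  rw [sum_congr rfl fun xy hxy ↦ by
    obtain ⟨hx, hy⟩ := mem_product.1 (mem_filter.1 hxy).1
    rw [uniformSet_of_mem (hA.mem_toFinset.1 hx), uniformSet_of_mem (hA.mem_toFinset.1 hy)]]
  rw [sum_const, nsmul_eq_mul]
  ring

lemma sum_conv_uniformSet_le_one (hA : A.Finite) (T : Finset G) :
    ∑ z ∈ T, conv (uniformSet A) (uniformSet A) z ≤ 1 := by
  rw [sum_conv_uniformSet hA, Set.ncard_eq_toFinset_card A hA]
  refine div_le_one_of_le₀ ?_ (by positivity)
  rw [sq, ← Nat.cast_mul, ← card_product]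
  exact_mod_cast card_filter_le _ _

lemma sum_conv_uniformSet_of_subset (hA : A.Finite) (hne : A.Nonempty) {T : Finset G}
    (hT : hA.toFinset + hA.toFinset ⊆ T) :
    ∑ z ∈ T, conv (uniformSet A) (uniformSet A) z = 1 := by
  have hn : (A.ncard : ℝ) ≠ 0 := by exact_mod_cast ((Set.ncard_pos hA).2 hne).ne'
  rw [sum_conv_uniformSet hA, filter_true_of_mem fun xy hxy ↦ hT (add_mem_add
    (mem_product.1 hxy).1 (mem_product.1 hxy).2), card_product,
    ← Set.ncard_eq_toFinset_card A hA]
  push_cast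
  field_simp

lemma entropy_conv_uniformSet_le (hA : A.Finite) (hne : A.Nonempty) {T : Finset G}
    (hT : (#T : ℝ) ≤ A.ncard) :
    entropy (conv (uniformSet A) (uniformSet A))
      ≤ log A.ncard + binEntropy (1 - ∑ z ∈ T, conv (uniformSet A) (uniformSet A) z)
        + (1 - ∑ z ∈ T, conv (uniformSet A) (uniformSet A) z) * log A.ncard := by
  set s := conv (uniformSet A) (uniformSet A)
  set B := hA.toFinset + hA.toFinset
  have hmass : ∑ z ∈ T, s z + ∑ z ∈ B \ T, s z = 1 := by
    rw [← sum_union disjoint_sdiff, union_sdiff_self_eq_union]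
    exact sum_conv_uniformSet_of_subset hA hne subset_union_right
  have hsupp : support s ⊆ ↑(T ∪ B \ T) := by
    rw [union_sdiff_self_eq_union, coe_union]
    exact (support_conv_subset (support_uniformSet_subset hA)
      (support_uniformSet_subset hA)).trans Set.subset_union_right
  have hcard : (#(B \ T) : ℝ) ≤ A.ncard ^ 2 := by
    rw [Set.ncard_eq_toFinset_card A hA, sq]
    exact_mod_cast (card_le_card sdiff_subset).trans card_add_le
  have hH := entropy_le_of_support_subset_union
    (conv_nonneg (uniformSet_nonneg A) (uniformSet_nonneg A)) disjoint_sdiff hsupp hT hcard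
  rw [show ∑ z ∈ B \ T, s z = 1 - ∑ z ∈ T, s z by linarith, log_pow] at hH
  rw [binEntropy_eq_negMulLog_add_negMulLog_one_sub, sub_sub_cancel]
  push_cast at hH
  linarith

omit [DecidableEq G] in
lemma IsDistribApproxGroup.exists_finset_mass_ge {ε : ℝ} (h : IsDistribApproxGroup ε A)
    (hA : A.Finite) (hne : A.Nonempty) :
    ∃ T : Finset G, (#T : ℝ) ≤ A.ncard ∧
      1 - ε ≤ ∑ z ∈ T, conv (uniformSet A) (uniformSet A) z := by
  classical
  obtain ⟨U, hUcard, hcount⟩ := h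
  have hn : 0 < A.ncard := (Set.ncard_pos hA).2 hne
  have hU : U.Finite := Set.finite_of_ncard_pos (hUcard ▸ hn)
  refine ⟨hU.toFinset, by rw [← Set.ncard_eq_toFinset_card U hU, hUcard], ?_⟩
  have hpairs : {p : G × G | p.1 ∈ A ∧ p.2 ∈ A ∧ p.1 + p.2 ∈ U}
      = ↑{xy ∈ hA.toFinset ×ˢ hA.toFinset | xy.1 + xy.2 ∈ hU.toFinset} := by
    ext
    simp [and_assoc]
  rwa [sum_conv_uniformSet hA, le_div_iff₀ (by positivity), ← Set.ncard_coe_finset, ← hpairs]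

end UniformConvolution

theorem deltaH_le_of_approx_group {G : Type*} [AddCommGroup G]
    (ε : ℝ) (hε : 0 < ε) (hε' : ε < Real.exp (-2))
    (A : Set G) (hfin : A.Finite) (hne : A.Nonempty)
    (happrox : IsDistribApproxGroup ε A) :
    entropy (conv (uniformSet A) (uniformSet A)) - entropy (uniformSet A)
      ≤ 2 * ε * Real.log (ε⁻¹ * A.ncard) := by
  classical
  obtain ⟨T, hT, hmass⟩ := happrox.exists_finset_mass_ge hfin hne
  set δ := 1 - ∑ z ∈ T, conv (uniformSet A) (uniformSet A) z
  have hδ : 0 ≤ δ := sub_nonneg.2 (sum_conv_uniformSet_le_one hfin T)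
  have hn : (A.ncard : ℝ) ≠ 0 := by exact_mod_cast ((Set.ncard_pos hfin).2 hne).ne'
  calc entropy (conv (uniformSet A) (uniformSet A)) - entropy (uniformSet A)
      ≤ binEntropy δ + δ * log A.ncard := by
        linarith [entropy_conv_uniformSet_le hfin hne hT, entropy_uniformSet hfin]
    _ ≤ 2 * ε * (log A.ncard - log ε) :=
        binEntropy_add_mul_le hδ (by linarith) hε (hε'.le.trans (exp_le_exp.2 (by norm_num)))
          (log_natCast_nonneg _)
    _ = 2 * ε * log (ε⁻¹ * A.ncard) := by
        rw [log_mul (inv_ne_zero hε.ne') hn, log_inv]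
        ring
end

section
/- Let α ∈ [0, 1/10), G an abelian group, A a non-empty finite subset of G, and H a finite subgroup of G. If the entropic Ruzsa distance d(U_A, U_H) ≤ α, then there exists x ∈ G such that |A Δ (H + {x})| ≤ 10α|H|. -/
open Real
open scoped Pointwise symmDiff

private lemma entropy_unif {G : Type*} [DecidableEq G] (s : Finset G) (hs : s.Nonempty) :
    entropy (fun x => if x ∈ s then ((s.card : ℝ))⁻¹ else 0) = Real.log s.card := by
  have hcard : (0 : ℝ) < s.card := by exact_mod_cast hs.card_pos
  have hsupp : Function.support
      (fun x => (if x ∈ s then ((s.card : ℝ))⁻¹ else 0) *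
        Real.log (if x ∈ s then ((s.card : ℝ))⁻¹ else 0)) ⊆ ↑s := by
    intro x hx
    simp only [Function.mem_support] at hx
    by_contra h
    rw [Finset.mem_coe] at h
    exact hx (by rw [if_neg h]; ring)
  rw [entropy, finsum_eq_sum_of_support_subset _ hsupp]
  have : ∀ x ∈ s, (if x ∈ s then ((s.card : ℝ))⁻¹ else 0) *
      Real.log (if x ∈ s then ((s.card : ℝ))⁻¹ else 0)
      = ((s.card : ℝ))⁻¹ * Real.log ((s.card : ℝ))⁻¹ := fun x hx => by
    simp only [if_pos hx]
  rw [Finset.sum_congr rfl this, Finset.sum_const, nsmul_eq_mul, Real.log_inv]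
  field_simp

/-- From `log x ≤ log y + t` with `x, y > 0` we get `x * (1 - t) ≤ y`. -/
private lemma mul_one_sub_le_of_log_le {x y t : ℝ} (hx : 0 < x) (hy : 0 < y)
    (h : Real.log x ≤ Real.log y + t) : x * (1 - t) ≤ y := by
  have hxy : x ≤ y * Real.exp t := by
    have h1 : Real.log x ≤ Real.log (y * Real.exp t) := by
      rw [Real.log_mul hy.ne' (Real.exp_pos t).ne', Real.log_exp]; exact h
    have := Real.exp_le_exp.mpr h1
    rwa [Real.exp_log hx, Real.exp_log (by positivity)] at this
  have h1t : 1 - t ≤ Real.exp (-t) := by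
    have := Real.add_one_le_exp (-t); linarith
  calc x * (1 - t) ≤ x * Real.exp (-t) :=
        mul_le_mul_of_nonneg_left h1t hx.le
    _ ≤ (y * Real.exp t) * Real.exp (-t) :=
        mul_le_mul_of_nonneg_right hxy (Real.exp_pos _).le
    _ = y := by rw [mul_assoc, ← Real.exp_add, add_neg_cancel, Real.exp_zero, mul_one]

set_option maxHeartbeats 2000000 in
theorem symmDiff_small_of_rdist_le {G : Type*} [AddCommGroup G]
    (α : ℝ) (hα : 0 ≤ α) (hα' : α < 1 / 10)
    (A : Set G) (hfin : A.Finite) (hne : A.Nonempty)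
    (H : AddSubgroup G) (hH : (H : Set G).Finite)
    (hd : rdist (uniformSet A) (uniformSet (H : Set G)) ≤ α) :
    ∃ x : G, ((A ∆ ((H : Set G) + {x})).ncard : ℝ) ≤ 10 * α * (H : Set G).ncard := by
  classical
  set Af := hfin.toFinset with hAfdef
  set Hf := hH.toFinset with hHfdef
  have hAmem : ∀ x, x ∈ Af ↔ x ∈ A := fun x => hfin.mem_toFinset
  have hHmem : ∀ x, x ∈ Hf ↔ x ∈ H := fun x => hH.mem_toFinset
  have hAfne : Af.Nonempty := by
    obtain ⟨x, hx⟩ := hne; exact ⟨x, (hAmem x).mpr hx⟩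
  have hHfne : Hf.Nonempty := ⟨0, (hHmem 0).mpr H.zero_mem⟩
  set n : ℝ := (Af.card : ℝ) with hndef
  set m : ℝ := (Hf.card : ℝ) with hmdef
  have hn : (0 : ℝ) < n := by rw [hndef]; exact_mod_cast hAfne.card_pos
  have hm : (0 : ℝ) < m := by rw [hmdef]; exact_mod_cast hHfne.card_pos
  -- the two uniform distributions
  have hAn : A.ncard = Af.card := by rw [← hfin.coe_toFinset, Set.ncard_coe_finset]
  have hHn : (H : Set G).ncard = Hf.card := by rw [← hH.coe_toFinset, Set.ncard_coe_finset]
  have hp : uniformSet A = fun x => if x ∈ Af then n⁻¹ else 0 := by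
    funext x
    simp only [uniformSet, Set.indicator_apply, hAn, one_div, hndef]
    by_cases hx : x ∈ A
    · rw [if_pos hx, if_pos ((hAmem x).mpr hx)]
    · rw [if_neg hx, if_neg (fun hc => hx ((hAmem x).mp hc))]
  have hq : uniformSet (H : Set G) = fun x => if x ∈ Hf then m⁻¹ else 0 := by
    funext x
    simp only [uniformSet, Set.indicator_apply, hHn, one_div, hmdef]
    by_cases hx : x ∈ (H : Set G)
    · rw [if_pos hx, if_pos ((hHmem x).mpr hx)]
    · rw [if_neg hx, if_neg (fun hc => hx ((hHmem x).mp hc))]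
  have hentp : entropy (uniformSet A) = Real.log n := by rw [hp]; exact entropy_unif Af hAfne
  have hentq : entropy (uniformSet (H : Set G)) = Real.log m := by
    rw [hq]; exact entropy_unif Hf hHfne
  -- the counting function
  set aN : G → ℕ := fun z => (Af.filter (fun x => z - x ∈ Hf)).card with haNdef
  have hnm : (0 : ℝ) < n * m := mul_pos hn hm
  have hconv : ∀ z, conv (uniformSet A) (uniformSet (H : Set G)) z = (aN z : ℝ) / (n * m) := by
    intro z
    rw [hp, hq]
    show ∑ᶠ x, (if x ∈ Af then n⁻¹ else 0) * (if z - x ∈ Hf then m⁻¹ else 0) = _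
    have hsupp : Function.support
        (fun x => (if x ∈ Af then n⁻¹ else 0) * (if z - x ∈ Hf then m⁻¹ else 0)) ⊆ ↑Af := by
      intro x hx
      simp only [Function.mem_support] at hx
      by_contra h
      rw [Finset.mem_coe] at h
      exact hx (by rw [if_neg h]; ring)
    rw [finsum_eq_sum_of_support_subset _ hsupp]
    have hterm : ∀ x ∈ Af, (if x ∈ Af then n⁻¹ else 0) * (if z - x ∈ Hf then m⁻¹ else 0)
        = if z - x ∈ Hf then n⁻¹ * m⁻¹ else 0 := fun x hx => by
      rw [if_pos hx]; split <;> ring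
    rw [Finset.sum_congr rfl hterm, ← Finset.sum_filter, Finset.sum_const, nsmul_eq_mul,
      div_eq_mul_inv, mul_inv]
  -- the sumset
  set Sf : Finset G := Af + Hf with hSfdef
  have hSne : Sf.Nonempty := hAfne.add hHfne
  have ha_zero : ∀ z, z ∉ Sf → aN z = 0 := by
    intro z hz
    rw [haNdef]
    simp only [Finset.card_eq_zero, Finset.filter_eq_empty_iff]
    intro x hx hmem
    exact hz (Finset.mem_add.mpr ⟨x, hx, z - x, hmem, by abel⟩)
  have ha_pos : ∀ z ∈ Sf, 1 ≤ aN z := by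
    intro z hz
    obtain ⟨x, hx, h, hh, rfl⟩ := Finset.mem_add.mp hz
    have : x ∈ Af.filter (fun y => x + h - y ∈ Hf) :=
      Finset.mem_filter.mpr ⟨hx, by simpa using hh⟩
    exact Finset.card_pos.mpr ⟨x, this⟩
  have ha_le_n : ∀ z, aN z ≤ Af.card := fun z => Finset.card_filter_le _ _
  have ha_le_m : ∀ z, aN z ≤ Hf.card := by
    intro z
    apply Finset.card_le_card_of_injOn (fun x => z - x)
    · intro x hx; exact (Finset.mem_filter.mp hx).2
    · intro x _ y _ hxy
      have h : z - x = z - y := hxy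
      have h2 := congrArg (fun w => z - w) h
      simpa [sub_sub_cancel] using h2
  -- total mass
  have hsumN : ∑ z ∈ Sf, aN z = Af.card * Hf.card := by
    have h1 : ∀ z, aN z = ∑ x ∈ Af, if z - x ∈ Hf then 1 else 0 := fun z => by
      rw [haNdef]; exact Finset.card_filter _ _
    calc ∑ z ∈ Sf, aN z = ∑ z ∈ Sf, ∑ x ∈ Af, if z - x ∈ Hf then 1 else 0 :=
          Finset.sum_congr rfl (fun z _ => h1 z)
      _ = ∑ x ∈ Af, ∑ z ∈ Sf, if z - x ∈ Hf then 1 else 0 := Finset.sum_comm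
      _ = ∑ x ∈ Af, Hf.card := by
          refine Finset.sum_congr rfl (fun x hx => ?_)
          rw [← Finset.card_filter]
          have : Sf.filter (fun z => z - x ∈ Hf) = Hf.image (fun h => x + h) := by
            ext z
            simp only [Finset.mem_filter, Finset.mem_image]
            constructor
            · rintro ⟨hzS, hzx⟩; exact ⟨z - x, hzx, by abel⟩
            · rintro ⟨h, hh, rfl⟩
              exact ⟨Finset.mem_add.mpr ⟨x, hx, h, hh, rfl⟩, by simpa using hh⟩
          rw [this, Finset.card_image_of_injective _ (add_right_injective x)]
      _ = Af.card * Hf.card := by rw [Finset.sum_const, smul_eq_mul]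
  have hsum : ∑ z ∈ Sf, (aN z : ℝ) = n * m := by
    rw [hndef, hmdef]; exact_mod_cast hsumN
  -- entropy of the convolution
  set T : ℝ := ∑ z ∈ Sf, ((aN z : ℝ) / (n * m)) * Real.log (aN z) with hTdef
  have hapos : ∀ z ∈ Sf, (0 : ℝ) < (aN z : ℝ) := by
    intro z hz; exact_mod_cast ha_pos z hz
  have hentc : entropy (conv (uniformSet A) (uniformSet (H : Set G))) =
      Real.log (n * m) - T := by
    rw [entropy]
    have hsupp : Function.support (fun z => conv (uniformSet A) (uniformSet (H : Set G)) z *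
        Real.log (conv (uniformSet A) (uniformSet (H : Set G)) z)) ⊆ ↑Sf := by
      intro z hz
      simp only [Function.mem_support] at hz
      by_contra h
      rw [Finset.mem_coe] at h
      apply hz
      rw [hconv z, ha_zero z h]
      norm_num
    rw [finsum_eq_sum_of_support_subset _ hsupp]
    have hterm : ∀ z ∈ Sf, conv (uniformSet A) (uniformSet (H : Set G)) z *
        Real.log (conv (uniformSet A) (uniformSet (H : Set G)) z)
        = ((aN z : ℝ) / (n * m)) * Real.log (aN z)
          - ((aN z : ℝ) / (n * m)) * Real.log (n * m) := by
      intro z hz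
      rw [hconv z, Real.log_div (hapos z hz).ne' hnm.ne']
      ring
    rw [Finset.sum_congr rfl hterm, Finset.sum_sub_distrib, ← Finset.sum_mul,
      ← Finset.sum_div, hsum, div_self hnm.ne', one_mul, ← hTdef]
    ring
  -- lower bound on T from the distance assumption
  have hT : (Real.log n + Real.log m) / 2 - α ≤ T := by
    rw [rdist, hentc, hentp, hentq, Real.log_mul hn.ne' hm.ne'] at hd
    linarith
  -- upper bounds for T
  have hTle : ∀ B : ℝ, (∀ z ∈ Sf, Real.log (aN z) ≤ B) → T ≤ B := by
    intro B hB
    calc T ≤ ∑ z ∈ Sf, ((aN z : ℝ) / (n * m)) * B := by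
          refine Finset.sum_le_sum (fun z hz => ?_)
          exact mul_le_mul_of_nonneg_left (hB z hz) (by positivity)
      _ = B := by rw [← Finset.sum_mul, ← Finset.sum_div, hsum, div_self hnm.ne', one_mul]
  have hTn : T ≤ Real.log n := by
    refine hTle _ (fun z hz => Real.log_le_log (hapos z hz) ?_)
    rw [hndef]; exact_mod_cast ha_le_n z
  have hTm : T ≤ Real.log m := by
    refine hTle _ (fun z hz => Real.log_le_log (hapos z hz) ?_)
    rw [hmdef]; exact_mod_cast ha_le_m z
  -- the maximizing element
  obtain ⟨z0, hz0S, hz0max⟩ := Finset.exists_max_image Sf aN hSne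
  set a0 : ℝ := (aN z0 : ℝ) with ha0def
  have ha0pos : (0 : ℝ) < a0 := hapos z0 hz0S
  have hTa0 : T ≤ Real.log a0 := by
    refine hTle _ (fun z hz => Real.log_le_log (hapos z hz) ?_)
    rw [ha0def]; exact_mod_cast hz0max z hz
  -- polynomial consequences of log inequalities
  have hmn : m * (1 - 2 * α) ≤ n := by
    apply mul_one_sub_le_of_log_le hm hn
    linarith
  have hnm2 : n * (1 - 2 * α) ≤ m := by
    apply mul_one_sub_le_of_log_le hn hm
    linarith
  have ha0m : m * (1 - 2 * α) ≤ a0 := by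
    apply mul_one_sub_le_of_log_le hm ha0pos
    linarith
  -- the quadratic bound
  set Q : ℝ := ∑ z ∈ Sf, (aN z : ℝ) ^ 2 with hQdef
  have hTQ : T ≤ Real.log m - 1 + Q / (n * m ^ 2) := by
    have hstep : ∀ z ∈ Sf, ((aN z : ℝ) / (n * m)) * Real.log (aN z)
        ≤ ((aN z : ℝ) / (n * m)) * (Real.log m - 1) + (aN z : ℝ) ^ 2 / (n * m ^ 2) := by
      intro z hz
      have hlog : Real.log (aN z) ≤ Real.log m - 1 + (aN z : ℝ) / m := by
        have h1 : Real.log ((aN z : ℝ) / m) ≤ (aN z : ℝ) / m - 1 :=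
          Real.log_le_sub_one_of_pos (div_pos (hapos z hz) hm)
        rw [Real.log_div (hapos z hz).ne' hm.ne'] at h1
        linarith
      calc ((aN z : ℝ) / (n * m)) * Real.log (aN z)
          ≤ ((aN z : ℝ) / (n * m)) * (Real.log m - 1 + (aN z : ℝ) / m) :=
            mul_le_mul_of_nonneg_left hlog (by positivity)
        _ = ((aN z : ℝ) / (n * m)) * (Real.log m - 1) + (aN z : ℝ) ^ 2 / (n * m ^ 2) := by
            field_simp
    calc T ≤ ∑ z ∈ Sf, (((aN z : ℝ) / (n * m)) * (Real.log m - 1)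
            + (aN z : ℝ) ^ 2 / (n * m ^ 2)) := Finset.sum_le_sum hstep
      _ = Real.log m - 1 + Q / (n * m ^ 2) := by
          rw [Finset.sum_add_distrib, ← Finset.sum_mul, ← Finset.sum_div, hsum,
            div_self hnm.ne', one_mul, ← Finset.sum_div, ← hQdef]
  have hQ1 : (1 - 2 * α) * (n * m ^ 2) ≤ Q := by
    have hnm2' : (0 : ℝ) < n * m ^ 2 := mul_pos hn (pow_pos hm 2)
    have h1 : 1 - 2 * α ≤ Q / (n * m ^ 2) := by
      have hlog : Real.log m - 2 * α ≤ Real.log n := by linarith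
      linarith [hT, hTQ]
    calc (1 - 2 * α) * (n * m ^ 2) ≤ (Q / (n * m ^ 2)) * (n * m ^ 2) :=
          mul_le_mul_of_nonneg_right h1 hnm2'.le
      _ = Q := by field_simp
  -- the coset of the maximizer
  set C0f : Finset G := Hf.image (fun h => h + z0) with hC0def
  have hC0card : C0f.card = Hf.card :=
    Finset.card_image_of_injective _ (add_left_injective z0)
  have hC0sub : C0f ⊆ Sf := by
    intro z hz
    obtain ⟨h, hh, rfl⟩ := Finset.mem_image.mp hz
    obtain ⟨x0, hx0, h0, hh0, hxz⟩ := Finset.mem_add.mp hz0S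
    refine Finset.mem_add.mpr ⟨x0, hx0, h0 + h, ?_, ?_⟩
    · rw [hHmem] at hh hh0 ⊢; exact H.add_mem hh0 hh
    · rw [← hxz]; abel
  have hinv : ∀ h ∈ Hf, aN (h + z0) = aN z0 := by
    intro h hh
    rw [hHmem] at hh
    apply congrArg Finset.card
    apply Finset.filter_congr
    intro x _
    have heq : h + z0 - x = h + (z0 - x) := by abel
    constructor
    · intro hmem
      rw [hHmem] at hmem ⊢
      rw [heq] at hmem
      simpa using H.sub_mem hmem hh
    · intro hmem
      rw [hHmem] at hmem ⊢
      rw [heq]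
      exact H.add_mem hh hmem
  have hsumC0 : ∑ z ∈ C0f, (aN z : ℝ) = m * a0 := by
    rw [hC0def, Finset.sum_image (fun x _ y _ h => add_left_injective z0 h)]
    rw [Finset.sum_congr rfl (fun h hh => by rw [hinv h hh])]
    rw [Finset.sum_const, nsmul_eq_mul, hmdef, ha0def]
  have hsumC0sq : ∑ z ∈ C0f, (aN z : ℝ) ^ 2 = m * a0 ^ 2 := by
    rw [hC0def, Finset.sum_image (fun x _ y _ h => add_left_injective z0 h)]
    rw [Finset.sum_congr rfl (fun h hh => by rw [hinv h hh])]
    rw [Finset.sum_const, nsmul_eq_mul, hmdef, ha0def]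
  have hoff : ∀ z ∈ Sf, z ∉ C0f → (aN z : ℝ) ≤ n - a0 := by
    intro z hzS hzC
    have hdisj : Disjoint (Af.filter (fun x => z - x ∈ Hf))
        (Af.filter (fun x => z0 - x ∈ Hf)) := by
      rw [Finset.disjoint_left]
      intro x hx1 hx2
      have h1 := (Finset.mem_filter.mp hx1).2
      have h2 := (Finset.mem_filter.mp hx2).2
      rw [hHmem] at h1 h2
      apply hzC
      refine Finset.mem_image.mpr ⟨z - z0, ?_, by abel⟩
      rw [hHmem]
      have : z - z0 = (z - x) - (z0 - x) := by abel
      rw [this]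
      exact H.sub_mem h1 h2
    have hcard : aN z + aN z0 ≤ Af.card := by
      rw [haNdef]
      calc (Af.filter (fun x => z - x ∈ Hf)).card + (Af.filter (fun x => z0 - x ∈ Hf)).card
          = ((Af.filter (fun x => z - x ∈ Hf)) ∪ (Af.filter (fun x => z0 - x ∈ Hf))).card :=
            (Finset.card_union_of_disjoint hdisj).symm
        _ ≤ Af.card := Finset.card_le_card (Finset.union_subset
            (Finset.filter_subset _ _) (Finset.filter_subset _ _))
    have : (aN z : ℝ) + a0 ≤ n := by
      rw [ha0def, hndef]; exact_mod_cast hcard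
    linarith
  have ha0n : a0 ≤ n := by rw [ha0def, hndef]; exact_mod_cast ha_le_n z0
  have ha0lem : a0 ≤ m := by rw [ha0def, hmdef]; exact_mod_cast ha_le_m z0
  have hQ2 : Q ≤ m * a0 ^ 2 + (n - a0) ^ 2 * m := by
    have hsplit : Q = (∑ z ∈ Sf \ C0f, (aN z : ℝ) ^ 2) + ∑ z ∈ C0f, (aN z : ℝ) ^ 2 := by
      rw [hQdef, Finset.sum_sdiff hC0sub]
    have hsd_sum : ∑ z ∈ Sf \ C0f, (aN z : ℝ) = n * m - m * a0 := by
      have := Finset.sum_sdiff hC0sub (f := fun z => (aN z : ℝ))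
      rw [hsumC0, hsum] at this
      linarith
    have hsd_sq : ∑ z ∈ Sf \ C0f, (aN z : ℝ) ^ 2
        ≤ (n - a0) * ∑ z ∈ Sf \ C0f, (aN z : ℝ) := by
      rw [Finset.mul_sum]
      refine Finset.sum_le_sum (fun z hz => ?_)
      have hz' := Finset.mem_sdiff.mp hz
      have hb := hoff z hz'.1 hz'.2
      have hnn : (0 : ℝ) ≤ (aN z : ℝ) := Nat.cast_nonneg _
      rw [sq]
      exact mul_le_mul_of_nonneg_right hb hnn
    have : (n - a0) * (n * m - m * a0) = (n - a0) ^ 2 * m := by ring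
    rw [hsplit, hsumC0sq]
    rw [hsd_sum] at hsd_sq
    linarith [hsd_sq, this.le, this.ge]
  -- the main quadratic inequality
  have hq2 : (1 - 2 * α) * (n * m) ≤ a0 ^ 2 + (n - a0) ^ 2 := by
    have h1 : ((1 - 2 * α) * (n * m)) * m ≤ (a0 ^ 2 + (n - a0) ^ 2) * m := by
      linarith [hQ1, hQ2]
    exact le_of_mul_le_mul_right h1 hm
  -- numeric endgame
  set X : ℝ := n - a0 with hXdef
  set Y : ℝ := m - a0 with hYdef
  clear_value X Y
  have hXnn : 0 ≤ X := by rw [hXdef]; linarith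
  have hYnn : 0 ≤ Y := by rw [hYdef]; linarith
  have hYle : Y ≤ 2 * α * m := by rw [hYdef]; linarith [ha0m]
  have hXle : X * (1 - 2 * α) ≤ 4 * α * m := by
    have hprod : (m * (1 - 2 * α)) * (1 - 2 * α) ≤ a0 * (1 - 2 * α) :=
      mul_le_mul_of_nonneg_right ha0m (by linarith)
    have hsq : 0 ≤ α * α * m := mul_nonneg (mul_nonneg hα hα) hm.le
    rw [hXdef]; linarith [hnm2, hprod, hsq]
  have hXhalf : X ≤ m / 2 := by
    have h1 : 0 ≤ (1 / 10 - α) * X := mul_nonneg (by linarith) hXnn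
    have h2 : 0 ≤ (1 / 10 - α) * m := mul_nonneg (by linarith) hm.le
    linarith [hXle, h1, h2]
  have hfinal : (X + Y) * m ≤ (10 * α * m) * m := by
    have hx2 : X * X ≤ X * (m / 2) := mul_le_mul_of_nonneg_left hXhalf hXnn
    have hy2 : Y * Y ≤ Y * (2 * α * m) := mul_le_mul_of_nonneg_left hYle hYnn
    have ha0nn : 0 ≤ a0 := ha0pos.le
    -- rewrite everything in terms of a0, X, Y : n = a0 + X, m = a0 + Y
    have hn_eq : n = a0 + X := by rw [hXdef]; ring
    have hm_eq : m = a0 + Y := by rw [hYdef]; ring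
    rw [hn_eq] at hq2
    rw [hm_eq] at hq2 hx2 hy2 ⊢
    have p1 : 0 ≤ (1 / 10 - α) * (a0 * X) :=
      mul_nonneg (by linarith) (mul_nonneg ha0nn hXnn)
    have p2 : 0 ≤ (1 / 10 - α) * (X * Y) :=
      mul_nonneg (by linarith) (mul_nonneg hXnn hYnn)
    have p3 : 0 ≤ a0 * Y := mul_nonneg ha0nn hYnn
    have p4 : 0 ≤ α * (a0 * a0) := mul_nonneg hα (mul_nonneg ha0nn ha0nn)
    have p5 : 0 ≤ α * (a0 * Y) := mul_nonneg hα p3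
    have p6 : 0 ≤ α * (Y * Y) := mul_nonneg hα (mul_nonneg hYnn hYnn)
    linarith [hq2, hx2, hy2, p1, p2, p3, p4, p5, p6]
  have hmain : X + Y ≤ 10 * α * m := le_of_mul_le_mul_right hfinal hm
  -- interpret the symmetric difference
  refine ⟨z0, ?_⟩
  have hcoset : (H : Set G) + {z0} = ↑C0f := by
    ext g
    simp only [Set.mem_add, Set.mem_singleton_iff, hC0def, Finset.coe_image,
      Set.mem_image, Finset.mem_coe]
    constructor
    · rintro ⟨h, hh, y, rfl, rfl⟩
      exact ⟨h, (hHmem h).mpr hh, rfl⟩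
    · rintro ⟨h, hh, rfl⟩
      exact ⟨h, (hHmem h).mp hh, z0, rfl, rfl⟩
  have hAset : A = ↑Af := (hfin.coe_toFinset).symm
  rw [hcoset, hAset, ← Finset.coe_symmDiff, Set.ncard_coe_finset]
  -- compute the cardinality of the symmetric difference
  have hinter : Af ∩ C0f = Af.filter (fun x => z0 - x ∈ Hf) := by
    ext x
    simp only [Finset.mem_inter, Finset.mem_filter, hC0def, Finset.mem_image]
    constructor
    · rintro ⟨hx, h, hh, rfl⟩
      refine ⟨hx, ?_⟩
      rw [hHmem] at hh ⊢
      simpa using H.neg_mem hh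
    · rintro ⟨hx, hz⟩
      refine ⟨hx, -(z0 - x), ?_, by abel⟩
      rw [hHmem] at hz ⊢
      exact H.neg_mem hz
  have hintercard : ((Af ∩ C0f).card : ℝ) = a0 := by rw [hinter, ha0def, haNdef]
  have hsd1 : ((Af \ C0f).card : ℝ) = n - a0 := by
    have := Finset.card_sdiff_add_card_inter Af C0f
    have hc : ((Af \ C0f).card : ℝ) + ((Af ∩ C0f).card : ℝ) = n := by
      rw [hndef]; exact_mod_cast this
    linarith [hintercard]
  have hsd2 : ((C0f \ Af).card : ℝ) = m - a0 := by
    have := Finset.card_sdiff_add_card_inter C0f Af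
    have hc : ((C0f \ Af).card : ℝ) + ((C0f ∩ Af).card : ℝ) = m := by
      rw [hmdef, ← hC0card]; exact_mod_cast this
    rw [Finset.inter_comm] at hc
    linarith [hintercard]
  have hsymm : ((Af ∆ C0f).card : ℝ) = (n - a0) + (m - a0) := by
    have : Af ∆ C0f = (Af \ C0f) ∪ (C0f \ Af) := rfl
    rw [this, Finset.card_union_of_disjoint (disjoint_sdiff_sdiff)]
    push_cast
    rw [hsd1, hsd2]
  rw [hsymm, hHn]
  calc (n - a0) + (m - a0) = X + Y := by rw [hXdef, hYdef]
    _ ≤ 10 * α * m := hmain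
    _ = 10 * α * (Hf.card : ℝ) := by rw [hmdef]
end
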